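/- (Theorem 3, compatibility.) Let P be any Borel probability measure on ℝ. There exist η₁ ∈ [0,1] and a Borel measurable f₁ : ℝ → ℝ with f₁ ≥ 0, ∫_ℝ f₁(y) dy = 1, f₁(0) = 0, and (1 − η₁) φ(y) + η₁ f₁(y) = m(y) for every y ∈ ℝ (i.e., P is compatible with the zero density assumption), if and only if ∫ x e^{−x²/2} dP(x) = 0. In particular, every symmetric P is compatible with the zero density assumption. -/

import Mathlib

open MeasureTheory Real Filter

/-- The standard normal density. -/
noncomputable def phi (t : ℝ) : ℝ := (Real.sqrt (2 * Real.pi))⁻¹ * Real.exp (-(t ^ 2) / 2)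

/-- The marginal density of `Y` in the signal-plus-noise model. -/
noncomputable def marginal (P : Measure ℝ) (y : ℝ) : ℝ := ∫ x, phi (y - x) ∂P

/-- `P` is compatible with the zero density assumption: there is a two-groups decomposition
`m = (1 - η₁) φ + η₁ f₁` with `f₁` a probability density vanishing at `0`. -/
def CompatibleZDA (P : Measure ℝ) : Prop :=
  ∃ η₁ : ℝ, η₁ ∈ Set.Icc (0 : ℝ) 1 ∧
    ∃ f₁ : ℝ → ℝ, Measurable f₁ ∧ (∀ y, 0 ≤ f₁ y) ∧ (∫ y : ℝ, f₁ y) = 1 ∧ f₁ 0 = 0 ∧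
      ∀ y, (1 - η₁) * phi y + η₁ * f₁ y = marginal P y

section helpers

set_option linter.unusedSectionVars false

lemma phi_pos (t : ℝ) : 0 < phi t := by unfold phi; positivity

lemma integral_exp_gauss : (∫ t : ℝ, Real.exp (-(t ^ 2) / 2)) = Real.sqrt (2 * Real.pi) := by
  have h := integral_gaussian (1/2 : ℝ)
  have : (fun t : ℝ => Real.exp (-(t ^ 2) / 2)) = fun t : ℝ => Real.exp (-(1/2 : ℝ) * t ^ 2) := by
    funext t; ring_nf
  rw [this, h]
  norm_num
  ring

lemma integral_phi : (∫ t : ℝ, phi t) = 1 := by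
  unfold phi
  rw [MeasureTheory.integral_const_mul, integral_exp_gauss]
  rw [inv_mul_cancel₀]
  positivity

lemma integrable_phi : Integrable phi := by
  unfold phi
  apply Integrable.const_mul
  have : (fun t : ℝ => Real.exp (-(t ^ 2) / 2)) = fun t : ℝ => Real.exp (-(1/2 : ℝ) * t ^ 2) := by
    funext t; ring_nf
  rw [this]
  exact integrable_exp_neg_mul_sq (by norm_num)

lemma measurable_phi : Measurable phi := by
  unfold phi; fun_prop

lemma phi_sub_eq (y x : ℝ) : phi (y - x) = phi y * Real.exp (x * y - x ^ 2 / 2) := by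
  unfold phi
  rw [mul_assoc, ← Real.exp_add]
  congr 1
  ring

lemma abs_mul_exp_le (x : ℝ) : |x| * Real.exp (-(x ^ 2) / 2) ≤ 1 := by
  have h1 : x ^ 2 ≤ Real.exp (x ^ 2) := by
    have := Real.add_one_le_exp (x ^ 2); nlinarith
  have h2 : (|x| * Real.exp (-(x ^ 2) / 2)) ^ 2 ≤ 1 := by
    have : (|x| * Real.exp (-(x ^ 2) / 2)) ^ 2 = x ^ 2 * Real.exp (-(x^2)) := by
      rw [mul_pow, sq_abs, sq (Real.exp _), ← Real.exp_add]
      congr 1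
      ring
    rw [this]
    have h3 : Real.exp (-(x^2)) = (Real.exp (x^2))⁻¹ := by rw [← Real.exp_neg]
    rw [h3]
    rw [mul_inv_le_iff₀ (Real.exp_pos _), one_mul]
    exact h1
  nlinarith [abs_nonneg x, Real.exp_pos (-(x^2)/2), mul_nonneg (abs_nonneg x) (Real.exp_pos (-(x^2)/2)).le]

lemma exp_sub_one_abs_le (t : ℝ) : |Real.exp t - 1| ≤ |t| * Real.exp |t| := by
  rcases le_or_gt 0 t with h | h
  · rw [abs_of_nonneg h, abs_of_nonneg (by linarith [Real.one_le_exp h] : (0:ℝ) ≤ Real.exp t - 1)]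
    have h1 := Real.add_one_le_exp (-t)
    have h2 : Real.exp (-t) * Real.exp t = 1 := by rw [← Real.exp_add]; simp
    nlinarith [Real.exp_pos t]
  · rw [abs_of_neg h, abs_of_nonpos (by linarith [Real.exp_lt_one_iff.2 h] : Real.exp t - 1 ≤ 0)]
    have h1 := Real.add_one_le_exp t
    have h2 : (1:ℝ) ≤ Real.exp (-t) := Real.one_le_exp (by linarith)
    nlinarith

lemma abs_le_exp_abs (x : ℝ) : |x| ≤ Real.exp |x| := by
  linarith [Real.add_one_le_exp |x|, abs_nonneg x]

lemma bound_le (x : ℝ) : |x| * Real.exp |x| * Real.exp (-(x ^ 2) / 2) ≤ Real.exp 2 := by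
  have h1 : |x| * Real.exp |x| * Real.exp (-(x ^ 2) / 2)
      ≤ Real.exp |x| * Real.exp |x| * Real.exp (-(x ^ 2) / 2) := by
    apply mul_le_mul_of_nonneg_right _ (Real.exp_pos _).le
    exact mul_le_mul_of_nonneg_right (abs_le_exp_abs x) (Real.exp_pos _).le
  have h2 : Real.exp |x| * Real.exp |x| * Real.exp (-(x ^ 2) / 2)
      = Real.exp (2 * |x| - x ^ 2 / 2) := by
    rw [← Real.exp_add, ← Real.exp_add]; ring_nf
  have h3 : 2 * |x| - x ^ 2 / 2 ≤ 2 := by nlinarith [sq_abs x, sq_nonneg (|x| - 2)]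
  calc _ ≤ _ := h1
    _ = _ := h2
    _ ≤ _ := Real.exp_le_exp.2 h3

noncomputable def gk (P : Measure ℝ) (y : ℝ) : ℝ := ∫ x, Real.exp (x * y - x ^ 2 / 2) ∂P

variable (P : Measure ℝ) [IsProbabilityMeasure P]

lemma expker_le (y x : ℝ) : Real.exp (x * y - x ^ 2 / 2) ≤ Real.exp (y ^ 2 / 2) :=
  Real.exp_le_exp.2 (by nlinarith [sq_nonneg (y - x)])

lemma measurable_expker (y : ℝ) : Measurable (fun x : ℝ => Real.exp (x * y - x ^ 2 / 2)) :=
  Real.measurable_exp.comp (by measurability)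

lemma integrable_expker (y : ℝ) : Integrable (fun x => Real.exp (x * y - x ^ 2 / 2)) P := by
  apply Integrable.mono' (integrable_const (Real.exp (y ^ 2 / 2)))
    (measurable_expker y).aestronglyMeasurable
  filter_upwards with x
  rw [norm_of_nonneg (Real.exp_pos _).le]
  exact expker_le y x

omit [IsProbabilityMeasure P] in
lemma marginal_eq (y : ℝ) : marginal P y = phi y * gk P y := by
  unfold marginal gk
  rw [← MeasureTheory.integral_const_mul]
  congr 1; funext x; exact phi_sub_eq y x

lemma measurable_gk : Measurable (gk P) := by
  have : StronglyMeasurable fun y => ∫ x, Real.exp (x * y - x ^ 2 / 2) ∂P := by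
    apply MeasureTheory.StronglyMeasurable.integral_prod_right'
      (f := fun p : ℝ × ℝ => Real.exp (p.2 * p.1 - p.2 ^ 2 / 2))
    exact (Real.measurable_exp.comp (by measurability)).stronglyMeasurable
  exact this.measurable

lemma measurable_marginal : Measurable (marginal P) := by
  have : marginal P = fun y => phi y * gk P y := funext (marginal_eq P)
  rw [this]
  exact measurable_phi.mul (measurable_gk P)

lemma integrable_prod_phi :
    Integrable (fun p : ℝ × ℝ => phi (p.1 - p.2)) ((volume : Measure ℝ).prod P) := by
  rw [MeasureTheory.integrable_prod_iff']
  · constructor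
    · filter_upwards with x
      exact integrable_phi.comp_sub_right x
    · apply (integrable_const (1 : ℝ)).congr
      filter_upwards with x
      symm
      simp only [Real.norm_eq_abs, abs_of_pos (phi_pos _)]
      rw [MeasureTheory.integral_sub_right_eq_self phi x, integral_phi]
  · exact (measurable_phi.comp (measurable_fst.sub measurable_snd)).aestronglyMeasurable

lemma integrable_marginal : Integrable (marginal P) :=
  (integrable_prod_phi P).integral_prod_left

lemma integral_marginal : (∫ y : ℝ, marginal P y) = 1 := by
  unfold marginal
  rw [MeasureTheory.integral_integral_swap (integrable_prod_phi P)]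
  have : ∀ x : ℝ, (∫ y : ℝ, phi (y - x)) = 1 := fun x => by
    rw [MeasureTheory.integral_sub_right_eq_self phi x, integral_phi]
  rw [integral_congr_ae (Filter.Eventually.of_forall this)]
  simp

section
variable (P : Measure ℝ) [IsProbabilityMeasure P]

lemma integrable_xexp : Integrable (fun x : ℝ => x * Real.exp (-(x ^ 2) / 2)) P := by
  apply Integrable.mono' (integrable_const (1 : ℝ)) (Measurable.aestronglyMeasurable (by measurability))
  filter_upwards with x
  rw [Real.norm_eq_abs, abs_mul, abs_of_pos (Real.exp_pos _)]
  exact abs_mul_exp_le x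

lemma quot_eq (y : ℝ) : (gk P y - gk P 0) / y
    = ∫ x, Real.exp (-(x ^ 2) / 2) * ((Real.exp (x * y) - 1) / y) ∂P := by
  unfold gk
  rw [← MeasureTheory.integral_sub (integrable_expker P y) (integrable_expker P 0),
    ← integral_div]
  congr 1; funext x
  have : Real.exp (x * y - x ^ 2 / 2) = Real.exp (-(x ^ 2) / 2) * Real.exp (x * y) := by
    rw [← Real.exp_add]; ring_nf
  have h0 : Real.exp (x * 0 - x ^ 2 / 2) = Real.exp (-(x ^ 2) / 2) := by ring_nf
  rw [this, h0]; ring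

lemma tendsto_quot :
    Tendsto (fun y => (gk P y - gk P 0) / y) (nhdsWithin 0 {0}ᶜ)
      (nhds (∫ x, x * Real.exp (-(x ^ 2) / 2) ∂P)) := by
  have key : Tendsto (fun y => ∫ x, Real.exp (-(x ^ 2) / 2) * ((Real.exp (x * y) - 1) / y) ∂P)
      (nhdsWithin 0 {0}ᶜ) (nhds (∫ x, x * Real.exp (-(x ^ 2) / 2) ∂P)) := by
    apply tendsto_integral_filter_of_dominated_convergence
      (fun x => |x| * Real.exp |x| * Real.exp (-(x ^ 2) / 2))
    · filter_upwards with y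
      apply Measurable.aestronglyMeasurable
      fun_prop
    · have hev : ∀ᶠ y in nhdsWithin (0:ℝ) {0}ᶜ, |y| ≤ 1 :=
        eventually_nhdsWithin_of_eventually_nhds
          (by filter_upwards [Metric.ball_mem_nhds (0:ℝ) one_pos] with y hy
              rw [Metric.mem_ball, Real.dist_eq, sub_zero] at hy
              exact hy.le)
      filter_upwards [hev] with y hy
      filter_upwards with x
      rw [Real.norm_eq_abs, abs_mul, abs_of_pos (Real.exp_pos _), abs_div]
      rcases eq_or_ne y 0 with rfl | hy0
      · simp
        positivity
      · have h1 : |Real.exp (x * y) - 1| / |y| ≤ |x| * Real.exp |x| := by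
          rw [div_le_iff₀ (abs_pos.2 hy0)]
          calc |Real.exp (x * y) - 1| ≤ |x * y| * Real.exp |x * y| := exp_sub_one_abs_le _
            _ ≤ |x| * Real.exp |x| * |y| := by
                rw [abs_mul]
                have he : Real.exp (|x| * |y|) ≤ Real.exp |x| := by
                  apply Real.exp_le_exp.2
                  calc |x| * |y| ≤ |x| * 1 := by
                        exact mul_le_mul_of_nonneg_left hy (abs_nonneg x)
                    _ = |x| := mul_one _
                calc |x| * |y| * Real.exp (|x| * |y|) ≤ |x| * |y| * Real.exp |x| :=
                      mul_le_mul_of_nonneg_left he (by positivity)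
                  _ = |x| * Real.exp |x| * |y| := by ring
        calc Real.exp (-(x ^ 2) / 2) * (|Real.exp (x * y) - 1| / |y|)
            ≤ Real.exp (-(x ^ 2) / 2) * (|x| * Real.exp |x|) :=
              mul_le_mul_of_nonneg_left h1 (Real.exp_pos _).le
          _ = |x| * Real.exp |x| * Real.exp (-(x ^ 2) / 2) := by ring
    · apply Integrable.mono' (integrable_const (Real.exp 2)) (Measurable.aestronglyMeasurable (by measurability))
      filter_upwards with x
      rw [Real.norm_eq_abs, abs_of_nonneg (by positivity)]
      exact bound_le x
    · filter_upwards with x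
      have hd : HasDerivAt (fun t : ℝ => Real.exp (x * t)) x 0 := by
        have : HasDerivAt (fun t : ℝ => x * t) x 0 := by
          simpa using (hasDerivAt_id (0:ℝ)).const_mul x
        simpa using this.exp
      have := hasDerivAt_iff_tendsto_slope.1 hd
      have heq : ∀ y : ℝ, slope (fun t : ℝ => Real.exp (x * t)) 0 y = (Real.exp (x * y) - 1) / y := by
        intro y; rw [slope_def_field]; simp [div_eq_mul_inv]
      rw [show slope (fun t : ℝ => Real.exp (x * t)) 0 = fun y => (Real.exp (x * y) - 1) / y
        from funext heq] at this
      have h2 := this.const_mul (Real.exp (-(x ^ 2) / 2))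
      simpa [mul_comm] using h2
  have : (fun y => (gk P y - gk P 0) / y)
      = fun y => ∫ x, Real.exp (-(x ^ 2) / 2) * ((Real.exp (x * y) - 1) / y) ∂P :=
    funext (quot_eq P)
  rw [this]
  exact key

lemma gk_zero_eq : gk P 0 = ∫ x, Real.exp (-(x ^ 2) / 2) ∂P := by
  unfold gk; congr 1; funext x; ring_nf

lemma gk_zero_le_one : gk P 0 ≤ 1 := by
  rw [gk_zero_eq]
  calc (∫ x, Real.exp (-(x ^ 2) / 2) ∂P) ≤ ∫ _x, (1:ℝ) ∂P := by
        apply integral_mono ((integrable_expker P 0).congr ?_) (integrable_const 1)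
        · intro x
          exact Real.exp_le_one_iff.2 (by nlinarith [sq_nonneg x])
        · filter_upwards with x
          congr 1; ring
    _ = 1 := by simp
  
lemma gk_zero_nonneg : 0 ≤ gk P 0 := by
  rw [gk_zero_eq]
  exact integral_nonneg fun x => (Real.exp_pos _).le

lemma gk_ge (hM : (∫ x, x * Real.exp (-(x ^ 2) / 2) ∂P) = 0) (y : ℝ) : gk P 0 ≤ gk P y := by
  have hle : ∀ x : ℝ, Real.exp (-(x ^ 2) / 2) * (1 + x * y) ≤ Real.exp (x * y - x ^ 2 / 2) := by
    intro x
    have h1 : 1 + x * y ≤ Real.exp (x * y) := by linarith [Real.add_one_le_exp (x * y)]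
    have h2 : Real.exp (x * y - x ^ 2 / 2) = Real.exp (-(x ^ 2) / 2) * Real.exp (x * y) := by
      rw [← Real.exp_add]; ring_nf
    rw [h2]
    exact mul_le_mul_of_nonneg_left h1 (Real.exp_pos _).le
  have hi : Integrable (fun x => Real.exp (-(x ^ 2) / 2) * (1 + x * y)) P := by
    have : (fun x => Real.exp (-(x ^ 2) / 2) * (1 + x * y))
        = fun x => Real.exp (-(x ^ 2) / 2) + (x * Real.exp (-(x ^ 2) / 2)) * y := by
      funext x; ring
    rw [this]
    exact ((integrable_expker P 0).congr (by filter_upwards with x; congr 1; ring)).add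
      ((integrable_xexp P).mul_const y)
  have key : (∫ x, Real.exp (-(x ^ 2) / 2) * (1 + x * y) ∂P) ≤ gk P y :=
    integral_mono hi (integrable_expker P y) hle
  have hval : (∫ x, Real.exp (-(x ^ 2) / 2) * (1 + x * y) ∂P) = gk P 0 := by
    have : (fun x => Real.exp (-(x ^ 2) / 2) * (1 + x * y))
        = fun x => Real.exp (-(x ^ 2) / 2) + (x * Real.exp (-(x ^ 2) / 2)) * y := by
      funext x; ring
    rw [this, integral_add ((integrable_expker P 0).congr
        (by filter_upwards with x; congr 1; ring)) ((integrable_xexp P).mul_const y),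
      integral_mul_const, hM, gk_zero_eq]
    simp
  linarith

/-- The backward implication. -/
lemma mpr_dir (hM : (∫ x, x * Real.exp (-(x ^ 2) / 2) ∂P) = 0) : CompatibleZDA P := by
  rcases eq_or_lt_of_le (gk_zero_le_one P) with h1 | h1
  · -- gk P 0 = 1, so P = δ₀ a.e. and marginal = phi
    have hae : ∀ᵐ x ∂P, x = 0 := by
      have hint : Integrable (fun x => 1 - Real.exp (-(x ^ 2) / 2)) P :=
        (integrable_const 1).sub ((integrable_expker P 0).congr
          (by filter_upwards with x; congr 1; ring))
      have hz : (∫ x, (1 - Real.exp (-(x ^ 2) / 2)) ∂P) = 0 := by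
        rw [integral_sub (integrable_const 1) ((integrable_expker P 0).congr
          (by filter_upwards with x; congr 1; ring)), ← gk_zero_eq, h1]
        simp
      have := (integral_eq_zero_iff_of_nonneg (fun x => by
        have : Real.exp (-(x ^ 2) / 2) ≤ 1 := Real.exp_le_one_iff.2 (by nlinarith [sq_nonneg x])
        simp only [Pi.zero_apply]; linarith) hint).1 hz
      filter_upwards [this] with x hx
      simp only [Pi.zero_apply] at hx
      have : Real.exp (-(x ^ 2) / 2) = 1 := by linarith
      have := (Real.exp_eq_one_iff _).1 this
      nlinarith [sq_nonneg x]
    have hgk : ∀ y, gk P y = 1 := by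
      intro y
      unfold gk
      rw [integral_congr_ae (g := fun _ => (1:ℝ)) ?_]
      · simp
      · filter_upwards [hae] with x hx
        rw [hx]; norm_num
    refine ⟨0, ⟨le_refl 0, zero_le_one⟩, Set.indicator (Set.Ioc 0 1) 1, 
      measurable_const.indicator measurableSet_Ioc,
      fun y => Set.indicator_nonneg (fun _ _ => zero_le_one) y, ?_, ?_, ?_⟩
    · rw [integral_indicator measurableSet_Ioc]
      simp
    · exact Set.indicator_of_notMem (by simp) _
    · intro y
      rw [marginal_eq P y, hgk y]
      ring
  · -- gk P 0 < 1
    set g0 := gk P 0 with hg0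
    refine ⟨1 - g0, ⟨by linarith, by linarith [gk_zero_nonneg P]⟩,
      fun y => (marginal P y - g0 * phi y) / (1 - g0), ?_, ?_, ?_, ?_, ?_⟩
    · exact ((measurable_marginal P).sub (measurable_const.mul measurable_phi)).div_const _
    · intro y
      apply div_nonneg _ (by linarith)
      rw [marginal_eq P y]
      have := gk_ge P hM y
      nlinarith [phi_pos y]
    · rw [integral_div, integral_sub (integrable_marginal P)
        (integrable_phi.const_mul g0), integral_const_mul, integral_marginal P, integral_phi]
      rw [mul_one, div_self (by linarith : (1:ℝ) - g0 ≠ 0)]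
    · show (marginal P 0 - g0 * phi 0) / (1 - g0) = 0
      rw [marginal_eq P 0, ← hg0, show phi 0 * g0 - g0 * phi 0 = 0 by ring, zero_div]
    · intro y
      have hne : (1:ℝ) - g0 ≠ 0 := by linarith
      field_simp
      ring

/-- The forward implication. -/
lemma mp_dir (hC : CompatibleZDA P) : (∫ x, x * Real.exp (-(x ^ 2) / 2) ∂P) = 0 := by
  obtain ⟨η₁, ⟨hη0, hη1⟩, f₁, hmeas, hpos, hint, hf0, heq⟩ := hC
  have hg0 : gk P 0 = 1 - η₁ := by
    have := heq 0
    rw [hf0, marginal_eq P 0] at this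
    have hφ := phi_pos 0
    nlinarith
  have hge : ∀ y, gk P 0 ≤ gk P y := by
    intro y
    have h := heq y
    rw [marginal_eq P y] at h
    have hφ := phi_pos y
    have : (1 - η₁) * phi y ≤ phi y * gk P y := by nlinarith [hpos y]
    rw [hg0]
    nlinarith
  set M := ∫ x, x * Real.exp (-(x ^ 2) / 2) ∂P with hM
  have ht := tendsto_quot P
  have hpos' : 0 ≤ M := by
    have hmono : nhdsWithin (0:ℝ) (Set.Ioi 0) ≤ nhdsWithin 0 {0}ᶜ :=
      nhdsWithin_mono 0 (fun y hy => ne_of_gt hy)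
    apply ge_of_tendsto (ht.mono_left hmono)
    filter_upwards [self_mem_nhdsWithin] with y hy
    exact div_nonneg (by linarith [hge y]) (le_of_lt hy)
  have hneg' : M ≤ 0 := by
    have hmono : nhdsWithin (0:ℝ) (Set.Iio 0) ≤ nhdsWithin 0 {0}ᶜ :=
      nhdsWithin_mono 0 (fun y hy => ne_of_lt hy)
    apply le_of_tendsto (ht.mono_left hmono)
    filter_upwards [self_mem_nhdsWithin] with y hy
    exact div_nonpos_of_nonneg_of_nonpos (by linarith [hge y]) (le_of_lt hy)
  linarith
end

end helpers

/-- Theorem 3: `P` is compatible with the zero density assumption iff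
`∫ x e^{-x²/2} dP(x) = 0`; in particular every symmetric `P` is compatible. -/
theorem stmt12 (P : Measure ℝ) [IsProbabilityMeasure P] :
    (CompatibleZDA P ↔ (∫ x, x * Real.exp (-(x ^ 2) / 2) ∂P) = 0) ∧
    (Measure.map (fun x : ℝ => -x) P = P → CompatibleZDA P) := by
  constructor
  · exact ⟨mp_dir P, mpr_dir P⟩
  · intro hsym
    apply mpr_dir
    have h1 : (∫ x, x * Real.exp (-(x ^ 2) / 2) ∂P)
        = ∫ x, x * Real.exp (-(x ^ 2) / 2) ∂(Measure.map (fun x : ℝ => -x) P) := by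
      rw [hsym]
    have h2 : (∫ x, x * Real.exp (-(x ^ 2) / 2) ∂(Measure.map (fun x : ℝ => -x) P))
        = ∫ x, (-x) * Real.exp (-((-x) ^ 2) / 2) ∂P := by
      rw [integral_map measurable_neg.aemeasurable]
      apply Measurable.aestronglyMeasurable
      measurability
    have h3 : (∫ x, (-x) * Real.exp (-((-x) ^ 2) / 2) ∂P)
        = - ∫ x, x * Real.exp (-(x ^ 2) / 2) ∂P := by
      rw [← integral_neg]
      congr 1; funext x; ring_nf
    linarith [h1, h2, h3, h1.trans (h2.trans h3)]
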